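/- arXiv:2504.17535 — 2 statements merged into one kernel-verified Lean document; each statement's English description precedes it below -/
import Mathlib

section
/- Let r ≥ 3 be an integer. On the set Fin 2 × Fin r, define involutions ρ₀,…,ρ_{r−1} ∈ Sym(Fin 2 × Fin r) by: for 0 ≤ i ≤ r−3, ρᵢ(ε, x) := (ε, (i i+1)(x)) (i.e. ρᵢ = Equiv.prodCongr (Equiv.refl (Fin 2)) (Equiv.swap i (i+1))); ρ_{r−2} := the transposition swapping (0, r−2) and (0, r−1); and ρ_{r−1}(ε, x) := ((0 1)(ε), x) (i.e. ρ_{r−1} = Equiv.prodCongr (Equiv.swap 0 1) (Equiv.refl (Fin r))). Then the family (ρ₀,…,ρ_{r−1}) satisfies the string property and the intersection property, and the generated subgroup is exactly the full stabilizer of the partition of Fin 2 × Fin r into the two rows {ε} × Fin r: ⟨ρ₀,…,ρ_{r−1}⟩ = { σ : ∃ π ∈ Sym(Fin 2), ∀ ε x, (σ (ε, x)).1 = π ε } (a group isomorphic to the wreath product S_r ≀ C₂, of order 2·(r!)²). -/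
/-!
Each parabolic subgroup `⟨ρᵢ : i ∈ I⟩` has an explicit description, `IsBlockPerm r (Fin.val '' I)`:
its elements permute the two rows, exchanging them only if `r - 1 ∈ I`; they keep every point
inside its run of edges in its row; and they move the two points of a column alike, unless the
column lies in the corner block, the run of column `r - 1` in row `0`. This description holds for
the generators and is closed under products. Conversely, by induction on the support, every
permutation satisfying it is a product of generators: a moved point is fixed by a transposition
inside the corner block or by a transposition `(x y)` applied to both rows, and both kinds arise
from the generators by conjugating along runs of edges. For `I ∩ J` the description is the
conjunction of those for `I` and `J`, which is the intersection property; for `I = Fin r` it says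
that `σ` permutes the rows.
-/

open Equiv Equiv.Perm

namespace SymWrC2

def Chained (E : ℕ → Prop) (x y : ℕ) : Prop := ∀ k, min x y ≤ k → k < max x y → E k

namespace Chained

variable {E F : ℕ → Prop} {x y z : ℕ}

theorem refl (E : ℕ → Prop) (x : ℕ) : Chained E x x := fun k h₁ h₂ => by omega

theorem symm (h : Chained E x y) : Chained E y x := fun k h₁ h₂ => h k (by omega) (by omega)

theorem trans (h₁ : Chained E x y) (h₂ : Chained E y z) : Chained E x z := fun k hk₁ hk₂ =>
  if hk : min x y ≤ k ∧ k < max x y then h₁ k hk.1 hk.2 else h₂ k (by omega) (by omega)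

theorem mono (h : Chained E x y) (hEF : ∀ k, E k → F k) : Chained F x y :=
  fun k h₁ h₂ => hEF k (h k h₁ h₂)

theorem and (hE : Chained E x y) (hF : Chained F x y) : Chained (fun k => E k ∧ F k) x y :=
  fun k h₁ h₂ => ⟨hE k h₁ h₂, hF k h₁ h₂⟩

theorem of_edge {k : ℕ} (h : E k) : Chained E k (k + 1) := fun j h₁ h₂ => by
  rwa [show j = k by omega]

theorem swap_apply {r : ℕ} {a b : Fin r} (h : Chained E a b) (c : Fin r) :
    Chained E c (swap a b c) := by
  rcases eq_or_ne c a with rfl | hca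
  · rwa [swap_apply_left]
  rcases eq_or_ne c b with rfl | hcb
  · rw [swap_apply_right]; exact h.symm
  rw [swap_apply_of_ne_of_ne hca hcb]; exact refl E c

end Chained

theorem swap_mem_of_chained {r : ℕ} {E : ℕ → Prop} (H : Subgroup (Perm (Fin r)))
    (hE : ∀ (k : ℕ) (hk : k + 1 < r), E k → swap ⟨k, by omega⟩ ⟨k + 1, hk⟩ ∈ H)
    {x y : Fin r} (h : Chained E x y) : swap x y ∈ H := by
  wlog hxy : x ≤ y generalizing x y
  · rw [swap_comm]; exact this h.symm (le_of_not_ge hxy)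
  obtain ⟨d, hd⟩ := Nat.exists_eq_add_of_le (Fin.le_def.mp hxy)
  induction d generalizing y with
  | zero => rw [show y = x from Fin.ext (by simpa using hd), swap_self]; exact H.one_mem
  | succ d ih =>
    have hz : swap x ⟨x + d, by omega⟩ ∈ H :=
      ih (fun k h₁ h₂ => h k (by simp at h₁ ⊢; omega) (by simp at h₂ ⊢; omega))
        (Fin.le_def.mpr (by simp)) rfl
    have hzy : swap ⟨x + d, by omega⟩ ⟨x + d + 1, by omega⟩ ∈ H :=
      hE _ _ (h (x + d) (by omega) (by omega))
    rw [show y = ⟨x + d + 1, by omega⟩ from Fin.ext hd]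
    rcases Nat.eq_zero_or_pos d with rfl | hd₀
    · simpa using hzy
    rw [swap_comm, ← swap_mul_swap_mul_swap (y := ⟨x + d, by omega⟩)
      (Fin.ne_of_val_ne (by simp; omega)) (Fin.ne_of_val_ne (by simp; omega))]
    exact H.mul_mem (H.mul_mem hzy hz) hzy

theorem swap_mem_of_swap_mem_of_swap_mem {α : Type*} [DecidableEq α] {H : Subgroup (Perm α)}
    {x y z : α} (hx : swap x z ∈ H) (hy : swap y z ∈ H) : swap x y ∈ H := by
  rcases eq_or_ne x z with rfl | hxz
  · rwa [swap_comm]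
  rcases eq_or_ne x y with rfl | hxy
  · rw [swap_self]; exact H.one_mem
  rw [swap_comm, ← swap_mul_swap_mul_swap hxz hxy]
  rw [swap_comm] at hy
  exact H.mul_mem (H.mul_mem hy hx) hy

def prodCongrRightHom (α β : Type*) : (α → Perm β) →* Perm (α × β) where
  toFun := prodCongrRight
  map_one' := rfl
  map_mul' _ _ := rfl

variable {r : ℕ}

def diagHom : Perm (Fin r) →* Perm (Fin 2 × Fin r) :=
  (prodCongrRightHom (Fin 2) (Fin r)).comp (Pi.constMonoidHom (Fin 2) (Perm (Fin r)))

def rowHom (ε : Fin 2) : Perm (Fin r) →* Perm (Fin 2 × Fin r) :=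
  (prodCongrRightHom (Fin 2) (Fin r)).comp (MonoidHom.mulSingle (fun _ => Perm (Fin r)) ε)

def swapRows : Perm (Fin 2 × Fin r) := prodCongr (swap 0 1) (Equiv.refl (Fin r))

@[simp] theorem prodCongrRightHom_apply {α β : Type*} (f : α → Perm β) (p : α × β) :
    prodCongrRightHom α β f p = (p.1, f p.1 p.2) := rfl

@[simp] theorem swapRows_apply (p : Fin 2 × Fin r) : swapRows p = (swap 0 1 p.1, p.2) := rfl

theorem rowHom_apply (ε : Fin 2) (e : Perm (Fin r)) (p : Fin 2 × Fin r) :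
    rowHom ε e p = (p.1, if p.1 = ε then e p.2 else p.2) := by
  obtain ⟨δ, x⟩ := p
  simp only [rowHom, MonoidHom.comp_apply, prodCongrRightHom_apply, MonoidHom.mulSingle_apply,
    Pi.mulSingle_apply]
  split_ifs with h <;> simp [h]

theorem rowHom_swap (ε : Fin 2) (x y : Fin r) : rowHom ε (swap x y) = swap (ε, x) (ε, y) := by
  ext1 ⟨δ, z⟩
  rw [rowHom_apply]
  rcases eq_or_ne δ ε with rfl | hδ
  · simp only [if_true, swap_apply_def, Prod.mk.injEq, true_and]
    split_ifs <;> rfl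
  · rw [if_neg hδ, swap_apply_of_ne_of_ne] <;> simp [hδ]

theorem diagHom_eq_rowHom_mul_rowHom (e : Perm (Fin r)) :
    diagHom e = rowHom 0 e * rowHom 1 e := by
  rw [diagHom, rowHom, rowHom, MonoidHom.comp_apply, MonoidHom.comp_apply, MonoidHom.comp_apply,
    ← map_mul]
  congr 1
  funext δ
  fin_cases δ <;> simp

theorem diagHom_mul_rowHom_mul_inv (a e : Perm (Fin r)) (ε : Fin 2) :
    diagHom a * rowHom ε e * (diagHom a)⁻¹ = rowHom ε (a * e * a⁻¹) := by
  rw [diagHom, rowHom, MonoidHom.comp_apply, MonoidHom.comp_apply, MonoidHom.comp_apply,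
    ← map_inv, ← map_mul, ← map_mul]
  congr 1
  funext δ
  rcases eq_or_ne δ ε with rfl | hδ <;> simp [*]

theorem swapRows_mul_rowHom_mul_inv (e : Perm (Fin r)) :
    swapRows * rowHom 0 e * swapRows⁻¹ = rowHom 1 e := by
  ext1 ⟨δ, z⟩
  rw [Perm.mul_apply, Perm.mul_apply]
  fin_cases δ <;> simp [rowHom_apply, swapRows, Perm.inv_def]

def gen (r : ℕ) (i : Fin r) : Perm (Fin 2 × Fin r) :=
  if h : (i : ℕ) + 2 < r then diagHom (swap i ⟨i + 1, by omega⟩)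
  else if h' : (i : ℕ) + 2 = r then rowHom 0 (swap i ⟨i + 1, by omega⟩)
  else swapRows

theorem gen_of_lt {i : Fin r} (h : (i : ℕ) + 2 < r) :
    gen r i = diagHom (swap i ⟨i + 1, by omega⟩) := dif_pos h

theorem gen_of_add_two_eq {i : Fin r} (h : (i : ℕ) + 2 = r) :
    gen r i = rowHom 0 (swap i ⟨i + 1, by omega⟩) := by
  rw [gen, dif_neg (by omega), dif_pos h]

theorem gen_of_add_one_eq {i : Fin r} (h : (i : ℕ) + 1 = r) : gen r i = swapRows := by
  rw [gen, dif_neg (by omega), dif_neg (by omega)]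

def LowEdge (r : ℕ) (S : Set ℕ) (k : ℕ) : Prop := k ∈ S ∧ k + 2 < r

/-- Edge `k` joins columns `k` and `k + 1`. The edge `r - 2` lies in row `0` once `r - 2 ∈ S`, but
in row `1` only if also `r - 1 ∈ S`: conjugating `ρ_{r-2}` by the row exchange `ρ_{r-1}`. -/
def RowEdge (r : ℕ) (S : Set ℕ) (ε : Fin 2) (k : ℕ) : Prop :=
  LowEdge r S k ∨ (k + 2 = r ∧ k ∈ S ∧ (ε = 0 ∨ r - 1 ∈ S))

def IsCorner (r : ℕ) (S : Set ℕ) (x : ℕ) : Prop :=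
  r - 2 ∈ S ∧ Chained (RowEdge r S 0) x (r - 1)

section Edges

variable {S T : Set ℕ} {ε ε' : Fin 2} {k x y : ℕ}

theorem RowEdge.to_row_zero (h : RowEdge r S ε k) : RowEdge r S 0 k := by
  unfold RowEdge at *; tauto

theorem RowEdge.of_last_mem (hS : r - 1 ∈ S) (h : RowEdge r S ε k) : RowEdge r S ε' k := by
  unfold RowEdge at *; tauto

theorem RowEdge.lowEdge_of_row_one (hS : r - 1 ∉ S) (h : RowEdge r S 1 k) : LowEdge r S k := by
  unfold RowEdge at h; simp_all

theorem RowEdge.inter (hS : RowEdge r S ε k) (hT : RowEdge r T ε k) :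
    RowEdge r (S ∩ T) ε k := by
  unfold RowEdge LowEdge at *; simp only [Set.mem_inter_iff]; tauto

theorem IsCorner.of_chained (hx : IsCorner r S x) (h : Chained (RowEdge r S 0) x y) :
    IsCorner r S y :=
  ⟨hx.1, h.symm.trans hx.2⟩

theorem IsCorner.inter (hS : IsCorner r S x) (hT : IsCorner r T x) : IsCorner r (S ∩ T) x :=
  ⟨⟨hS.1, hT.1⟩, (hS.2.and hT.2).mono fun _ h => h.1.inter h.2⟩

theorem Chained.lowEdge_of_not_isCorner {x y : Fin r} (h : Chained (RowEdge r S ε) x y)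
    (hx : ¬IsCorner r S x) : Chained (LowEdge r S) x y := by
  intro k h₁ h₂
  refine (h k h₁ h₂).resolve_right fun ⟨hk, hkS, _⟩ =>
    hx ⟨by rwa [show r - 2 = k by omega], ?_⟩
  exact fun j hj₁ hj₂ => (h j (by omega) (by omega)).to_row_zero

end Edges

structure IsBlockPerm (r : ℕ) (S : Set ℕ) (σ : Perm (Fin 2 × Fin r)) : Prop where
  permutes_rows : ∃ π : Perm (Fin 2), (π = 1 ∨ r - 1 ∈ S) ∧ ∀ p, (σ p).1 = π p.1
  chained : ∀ p : Fin 2 × Fin r, Chained (RowEdge r S p.1) p.2 (σ p).2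
  snd_eq : ∀ x : Fin r, ¬IsCorner r S x → ∀ ε ε', (σ (ε, x)).2 = (σ (ε', x)).2

namespace IsBlockPerm

variable {S T : Set ℕ} {σ τ : Perm (Fin 2 × Fin r)}

theorem one (S : Set ℕ) : IsBlockPerm r S 1 where
  permutes_rows := ⟨1, Or.inl rfl, fun _ => rfl⟩
  chained _ := Chained.refl _ _
  snd_eq _ _ _ _ := rfl

theorem rowEdge_fst_iff (hσ : IsBlockPerm r S σ) (p : Fin 2 × Fin r) (k : ℕ) :
    RowEdge r S (σ p).1 k ↔ RowEdge r S p.1 k := by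
  obtain ⟨π, rfl | hS, hπ⟩ := hσ.permutes_rows
  · rw [hπ]; rfl
  · exact ⟨RowEdge.of_last_mem hS, RowEdge.of_last_mem hS⟩

theorem mul (hσ : IsBlockPerm r S σ) (hτ : IsBlockPerm r S τ) : IsBlockPerm r S (σ * τ) where
  permutes_rows := by
    obtain ⟨π, hπ, hσπ⟩ := hσ.permutes_rows
    obtain ⟨π', hπ', hτπ⟩ := hτ.permutes_rows
    refine ⟨π * π', ?_, fun p => by simp [hσπ, hτπ]⟩
    rcases hπ with rfl | h
    · simpa using hπ'
    · exact Or.inr h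
  chained p :=
    (hτ.chained p).trans <| (hσ.chained (τ p)).mono fun k => (hτ.rowEdge_fst_iff p k).1
  snd_eq x hx ε ε' := by
    have hy : ¬IsCorner r S (τ (0, x)).2 := fun h => hx (h.of_chained (hτ.chained (0, x)).symm)
    have hτx : ∀ δ, τ (δ, x) = ((τ (δ, x)).1, (τ (0, x)).2) :=
      fun δ => Prod.ext rfl (hτ.snd_eq x hx δ 0)
    rw [Perm.mul_apply, Perm.mul_apply, hτx ε, hτx ε']
    exact hσ.snd_eq _ hy _ _

theorem inter (hS : IsBlockPerm r S σ) (hT : IsBlockPerm r T σ) : IsBlockPerm r (S ∩ T) σ where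
  permutes_rows := by
    obtain ⟨π, hπ, hσπ⟩ := hS.permutes_rows
    obtain ⟨π', hπ', hσπ'⟩ := hT.permutes_rows
    rcases hπ with rfl | hS'
    · exact ⟨1, Or.inl rfl, hσπ⟩
    rcases hπ' with rfl | hT'
    · exact ⟨1, Or.inl rfl, hσπ'⟩
    exact ⟨π, Or.inr ⟨hS', hT'⟩, hσπ⟩
  chained p := ((hS.chained p).and (hT.chained p)).mono fun _ h => h.1.inter h.2
  snd_eq x hx := by
    by_cases hxS : IsCorner r S x
    · by_cases hxT : IsCorner r T x
      · exact absurd (hxS.inter hxT) hx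
      · exact hT.snd_eq x hxT
    · exact hS.snd_eq x hxS

end IsBlockPerm

section Generators

variable {S : Set ℕ} {ε : Fin 2}

theorem isBlockPerm_diagHom_swap {x y : Fin r} (h : Chained (LowEdge r S) x y) :
    IsBlockPerm r S (diagHom (swap x y)) where
  permutes_rows := ⟨1, Or.inl rfl, fun _ => rfl⟩
  chained p := (h.mono fun _ => Or.inl).swap_apply p.2
  snd_eq _ _ _ _ := rfl

theorem isBlockPerm_rowHom_swap {x y : Fin r} (hx : IsCorner r S x)
    (h : Chained (RowEdge r S ε) x y) : IsBlockPerm r S (rowHom ε (swap x y)) where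
  permutes_rows := ⟨1, Or.inl rfl, fun _ => rfl⟩
  chained := by
    rintro ⟨δ, z⟩
    rw [rowHom_apply]
    split_ifs with hδ
    · subst hδ; exact h.swap_apply z
    · exact Chained.refl _ _
  snd_eq z hz δ δ' := by
    have hy : IsCorner r S y := hx.of_chained (h.mono fun _ => RowEdge.to_row_zero)
    have hzx : z ≠ x := by rintro rfl; exact hz hx
    have hzy : z ≠ y := by rintro rfl; exact hz hy
    simp only [rowHom_apply, swap_apply_of_ne_of_ne hzx hzy, ite_self]

theorem isBlockPerm_swapRows (hS : r - 1 ∈ S) : IsBlockPerm r S swapRows where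
  permutes_rows := ⟨swap 0 1, Or.inr hS, fun _ => rfl⟩
  chained _ := Chained.refl _ _
  snd_eq _ _ _ _ := rfl

theorem isBlockPerm_gen {I : Set (Fin r)} {i : Fin r} (hi : i ∈ I) :
    IsBlockPerm r (Fin.val '' I) (gen r i) := by
  have hiS : (i : ℕ) ∈ Fin.val '' I := Set.mem_image_of_mem _ hi
  rcases lt_trichotomy ((i : ℕ) + 2) r with h | h | h
  · rw [gen_of_lt h]
    exact isBlockPerm_diagHom_swap (Chained.of_edge ⟨hiS, h⟩)
  · have hedge : Chained (RowEdge r (Fin.val '' I) 0) i (i + 1) :=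
      Chained.of_edge (Or.inr ⟨h, hiS, Or.inl rfl⟩)
    rw [gen_of_add_two_eq h]
    refine isBlockPerm_rowHom_swap ⟨by rwa [show r - 2 = i by omega], ?_⟩ hedge
    rwa [show r - 1 = i + 1 by omega]
  · rw [gen_of_add_one_eq (by omega)]
    exact isBlockPerm_swapRows (by rwa [show r - 1 = i by omega])

end Generators

def parabolic (r : ℕ) (I : Set (Fin r)) : Subgroup (Perm (Fin 2 × Fin r)) :=
  Subgroup.closure (gen r '' I)

theorem isBlockPerm_of_mem_parabolic {I : Set (Fin r)} {σ : Perm (Fin 2 × Fin r)}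
    (hσ : σ ∈ parabolic r I) : IsBlockPerm r (Fin.val '' I) σ := by
  rw [parabolic, ← Subgroup.mem_toSubmonoid, Subgroup.closure_toSubmonoid_of_finite] at hσ
  induction hσ using Submonoid.closure_induction with
  | mem _ h => obtain ⟨i, hi, rfl⟩ := h; exact isBlockPerm_gen hi
  | one => exact IsBlockPerm.one _
  | mul _ _ _ _ ha hb => exact ha.mul hb

section Membership

variable {I : Set (Fin r)} {ε : Fin 2}

theorem gen_mem_parabolic {i : Fin r} (hi : i ∈ I) : gen r i ∈ parabolic r I :=
  Subgroup.subset_closure ⟨i, hi, rfl⟩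

theorem swapRows_mem_parabolic (hS : r - 1 ∈ Fin.val '' I) : swapRows ∈ parabolic r I := by
  obtain ⟨i, hi, hir⟩ := hS
  rw [← gen_of_add_one_eq (i := i) (by omega)]
  exact gen_mem_parabolic hi

theorem diagHom_swap_mem_parabolic {x y : Fin r} (h : Chained (LowEdge r (Fin.val '' I)) x y) :
    diagHom (swap x y) ∈ parabolic r I := by
  refine swap_mem_of_chained ((parabolic r I).comap diagHom)
    (fun k hk ⟨⟨i, hi, hik⟩, hk₂⟩ => ?_) h
  subst hik
  rw [Subgroup.mem_comap, ← gen_of_lt hk₂]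
  exact gen_mem_parabolic hi

theorem rowHom_swap_last_mem_parabolic {x : Fin r} (hx : IsCorner r (Fin.val '' I) x) :
    rowHom 0 (swap x ⟨r - 1, Nat.sub_one_lt_of_lt x.isLt⟩) ∈ parabolic r I := by
  obtain ⟨d, hd⟩ : ∃ d, (x : ℕ) + d = r - 1 := ⟨r - 1 - x, by omega⟩
  induction d generalizing x with
  | zero =>
    rw [show x = ⟨r - 1, by omega⟩ from Fin.ext (by simpa using hd), swap_self,
      ← Perm.one_def, map_one]
    exact one_mem _
  | succ d ih =>
    have hedge : RowEdge r (Fin.val '' I) 0 x := hx.2 x (by omega) (by omega)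
    rcases Nat.eq_zero_or_pos d with rfl | hd₀
    · obtain ⟨i, hi, hix⟩ := hx.1
      obtain rfl : i = x := Fin.ext (by omega)
      have hlast : (⟨r - 1, by omega⟩ : Fin r) = ⟨i + 1, by omega⟩ := Fin.ext (by simp; omega)
      rw [hlast, ← gen_of_add_two_eq (by omega)]
      exact gen_mem_parabolic hi
    · obtain ⟨⟨i, hi, hix⟩, hi₂⟩ : LowEdge r (Fin.val '' I) x :=
        hedge.resolve_right fun h => by omega
      obtain rfl : i = x := Fin.ext hix
      have hg := gen_mem_parabolic hi
      have hτ := ih (x := ⟨i + 1, by omega⟩) (hx.of_chained (Chained.of_edge hedge))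
        (by simp; omega)
      rw [gen_of_lt hi₂] at hg
      have hconj := mul_mem (mul_mem hg hτ) (inv_mem hg)
      rwa [diagHom_mul_rowHom_mul_inv, ← swap_apply_apply, swap_apply_right,
        swap_apply_of_ne_of_ne (Fin.ne_of_val_ne (by simp; omega))
          (Fin.ne_of_val_ne (by simp; omega))] at hconj

theorem rowHom_zero_swap_mem_parabolic {x y : Fin r} (hx : IsCorner r (Fin.val '' I) x)
    (hy : IsCorner r (Fin.val '' I) y) : rowHom 0 (swap x y) ∈ parabolic r I :=
  swap_mem_of_swap_mem_of_swap_mem (H := (parabolic r I).comap (rowHom 0))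
    (rowHom_swap_last_mem_parabolic hx) (rowHom_swap_last_mem_parabolic hy)

theorem rowHom_swap_mem_parabolic {x y : Fin r} (hx : IsCorner r (Fin.val '' I) x)
    (h : Chained (RowEdge r (Fin.val '' I) ε) x y) : rowHom ε (swap x y) ∈ parabolic r I := by
  have h₀ :=
    rowHom_zero_swap_mem_parabolic hx (hx.of_chained (h.mono fun _ => RowEdge.to_row_zero))
  obtain rfl | rfl : ε = 0 ∨ ε = 1 := by omega
  · exact h₀
  by_cases hS : r - 1 ∈ Fin.val '' I
  · have hs := swapRows_mem_parabolic hS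
    rw [← swapRows_mul_rowHom_mul_inv]
    exact mul_mem (mul_mem hs h₀) (inv_mem hs)
  · have hd := diagHom_swap_mem_parabolic (h.mono fun _ => RowEdge.lowEdge_of_row_one hS)
    rw [diagHom_eq_rowHom_mul_rowHom] at hd
    simpa using mul_mem (inv_mem h₀) hd

end Membership

open Finset in
theorem card_support_diagHom_swap_mul_lt {σ : Perm (Fin 2 × Fin r)} {x y : Fin r} (hxy : x ≠ y)
    (h : ∀ ε, σ (ε, x) = (ε, y)) : #(diagHom (swap x y) * σ).support < #σ.support := by
  have h₁ := card_support_swap_mul (f := σ) (x := (1, x)) (by simp [h, hxy.symm])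
  have h₀ := card_support_swap_mul (f := swap (1, x) (σ (1, x)) * σ) (x := (0, x))
    (by simp [h, swap_apply_of_ne_of_ne, hxy.symm])
  rw [Perm.mul_apply, h 0, h 1, swap_apply_of_ne_of_ne (by simp) (by simp)] at h₀
  rw [h 1] at h₁
  rw [diagHom_eq_rowHom_mul_rowHom, rowHom_swap, rowHom_swap, mul_assoc]
  exact h₀.trans h₁

section Generation

variable {I : Set (Fin r)}

open Finset in
theorem mem_parabolic_of_isBlockPerm_of_fst_eq {σ : Perm (Fin 2 × Fin r)}
    (hσ : IsBlockPerm r (Fin.val '' I) σ) (hrow : ∀ p, (σ p).1 = p.1) :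
    σ ∈ parabolic r I := by
  induction hn : #σ.support using Nat.strong_induction_on generalizing σ with
  | _ n ih =>
  have step : ∀ g ∈ parabolic r I, (∀ p, (g p).1 = p.1) → #(g * σ).support < n →
      σ ∈ parabolic r I := fun g hg hgrow hlt => by
    have := ih _ hlt ((isBlockPerm_of_mem_parabolic hg).mul hσ)
      (fun p => (hgrow _).trans (hrow p)) rfl
    simpa using mul_mem (inv_mem hg) this
  by_cases hσ₁ : σ = 1
  · rw [hσ₁]; exact one_mem _
  obtain ⟨⟨ε, x⟩, hp⟩ : ∃ p, σ p ≠ p := not_forall.mp fun h => hσ₁ (Equiv.ext h)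
  have hσp : σ (ε, x) = (ε, (σ (ε, x)).2) := Prod.ext (hrow _) rfl
  by_cases hx : IsCorner r (Fin.val '' I) x
  · refine step _ (rowHom_swap_mem_parabolic hx (hσ.chained (ε, x))) (fun _ => rfl) ?_
    rw [← hn, rowHom_swap, ← hσp]
    exact card_support_swap_mul hp
  · refine step _ (diagHom_swap_mem_parabolic ((hσ.chained (ε, x)).lowEdge_of_not_isCorner hx))
      (fun _ => rfl) ?_
    rw [← hn]
    refine card_support_diagHom_swap_mul_lt (fun hxy => hp ?_)
      fun δ => Prod.ext (hrow _) (hσ.snd_eq x hx δ ε)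
    rw [hσp, ← hxy]

theorem mem_parabolic_of_isBlockPerm {σ : Perm (Fin 2 × Fin r)}
    (hσ : IsBlockPerm r (Fin.val '' I) σ) : σ ∈ parabolic r I := by
  obtain ⟨π, hπ, hσπ⟩ := hσ.permutes_rows
  obtain rfl | rfl : π = 1 ∨ π = swap 0 1 := by clear hπ hσπ; revert π; decide
  · exact mem_parabolic_of_isBlockPerm_of_fst_eq hσ hσπ
  have hs := swapRows_mem_parabolic (hπ.resolve_left (by decide))
  have hrow : ∀ p, ((swapRows * σ : Perm (Fin 2 × Fin r)) p).1 = p.1 := fun p => by simp [hσπ]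
  simpa using mul_mem (inv_mem hs)
    (mem_parabolic_of_isBlockPerm_of_fst_eq ((isBlockPerm_of_mem_parabolic hs).mul hσ) hrow)

theorem mem_parabolic_iff {σ : Perm (Fin 2 × Fin r)} :
    σ ∈ parabolic r I ↔ IsBlockPerm r (Fin.val '' I) σ :=
  ⟨isBlockPerm_of_mem_parabolic, mem_parabolic_of_isBlockPerm⟩

end Generation

theorem parabolic_inf_parabolic (I J : Set (Fin r)) :
    parabolic r I ⊓ parabolic r J = parabolic r (I ∩ J) := by
  refine le_antisymm (fun σ hσ => ?_) (le_inf (Subgroup.closure_mono (Set.image_mono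
    Set.inter_subset_left)) (Subgroup.closure_mono (Set.image_mono Set.inter_subset_right)))
  rw [Subgroup.mem_inf, mem_parabolic_iff, mem_parabolic_iff] at hσ
  rw [mem_parabolic_iff, Set.image_inter Fin.val_injective]
  exact hσ.1.inter hσ.2

theorem mem_parabolic_univ_iff (hr : 2 ≤ r) {σ : Perm (Fin 2 × Fin r)} :
    σ ∈ parabolic r Set.univ ↔ ∃ π : Perm (Fin 2), ∀ ε x, (σ (ε, x)).1 = π ε := by
  rw [mem_parabolic_iff, Set.image_univ, Fin.range_val]
  have hchain : ∀ ε (x y : ℕ), x < r → y < r → Chained (RowEdge r (Set.Iio r) ε) x y :=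
    fun ε x y hx hy k h₁ h₂ => by
      by_cases hk : k + 2 < r
      · exact Or.inl ⟨by simp; omega, hk⟩
      · exact Or.inr ⟨by omega, by simp; omega, Or.inr (by simp; omega)⟩
  refine ⟨fun hσ => ?_, fun ⟨π, hπ⟩ => ?_⟩
  · obtain ⟨π, -, hπ⟩ := hσ.permutes_rows
    exact ⟨π, fun ε x => hπ (ε, x)⟩
  refine ⟨⟨π, Or.inr (by simp; omega), fun p => hπ p.1 p.2⟩,
    fun p => hchain _ _ _ p.2.isLt (σ p).2.isLt, fun x hx => absurd ?_ hx⟩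
  exact ⟨by simp; omega, hchain _ _ _ x.isLt (by omega)⟩

theorem gen_mul_self (i : Fin r) : gen r i * gen r i = 1 := by
  unfold gen
  split_ifs
  · rw [← map_mul, swap_mul_self, map_one]
  · rw [← map_mul, swap_mul_self, map_one]
  · ext1 ⟨δ, z⟩; simp

theorem commute_gen_gen {i j : Fin r} (h : (i : ℕ) + 2 ≤ j) : Commute (gen r i) (gen r j) := by
  rw [gen_of_lt (by omega)]
  rcases lt_or_eq_of_le (show (j : ℕ) + 1 ≤ r from j.isLt) with hj | hj
  · have hs : Commute (swap i ⟨i + 1, by omega⟩) (swap j ⟨j + 1, hj⟩) :=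
      (disjoint_swap_swap (by simp [Fin.ext_iff]; omega)).commute
    rcases lt_or_eq_of_le (show (j : ℕ) + 2 ≤ r by omega) with hj₂ | hj₂
    · rw [gen_of_lt hj₂]
      exact hs.map diagHom
    · have hconj :=
        diagHom_mul_rowHom_mul_inv (swap i ⟨i + 1, by omega⟩) (swap j ⟨j + 1, hj⟩) 0
      rw [hs.mul_inv_cancel] at hconj
      rw [gen_of_add_two_eq hj₂]
      exact mul_inv_eq_iff_eq_mul.mp hconj
  · rw [gen_of_add_one_eq hj]
    exact Equiv.ext fun _ => rfl

theorem gen_mul_gen_sq {i j : Fin r} (h : (i : ℕ) + 2 ≤ j ∨ (j : ℕ) + 2 ≤ i) :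
    (gen r i * gen r j) ^ 2 = 1 := by
  have hc : Commute (gen r i) (gen r j) := h.elim commute_gen_gen fun h => (commute_gen_gen h).symm
  rw [hc.mul_pow, sq, sq, gen_mul_self, gen_mul_self, one_mul]

end SymWrC2

open SymWrC2

/-- Lemma "speccase": the CPR graph of the wreath product `S_r ≀ C₂` satisfies the string
and intersection properties, and generates the full stabilizer of the partition of
`Fin 2 × Fin r` into the two rows. -/
theorem wreath_Sr_C2_is_string_C_group
    (r : ℕ) (hr : 3 ≤ r) (ρ : Fin r → Equiv.Perm (Fin 2 × Fin r))
    (hlow : ∀ i : Fin r, ∀ hi : (i : ℕ) + 3 ≤ r,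
      ρ i = Equiv.prodCongr (Equiv.refl (Fin 2))
        (Equiv.swap ⟨(i : ℕ), by omega⟩ ⟨(i : ℕ) + 1, by omega⟩))
    (hr2 : ∀ i : Fin r, (i : ℕ) = r - 2 →
      ρ i = Equiv.swap (0, ⟨r - 2, by omega⟩) (0, ⟨r - 1, by omega⟩))
    (hr1 : ∀ i : Fin r, (i : ℕ) = r - 1 →
      ρ i = Equiv.prodCongr (Equiv.swap (0 : Fin 2) 1) (Equiv.refl (Fin r))) :
    (∀ i j : Fin r, (i : ℕ) + 2 ≤ (j : ℕ) ∨ (j : ℕ) + 2 ≤ (i : ℕ) →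
      (ρ i * ρ j) ^ 2 = 1) ∧
    (∀ I J : Set (Fin r),
      Subgroup.closure (ρ '' I) ⊓ Subgroup.closure (ρ '' J) =
        Subgroup.closure (ρ '' (I ∩ J))) ∧
    (∀ σ : Equiv.Perm (Fin 2 × Fin r), σ ∈ Subgroup.closure (Set.range ρ) ↔
      ∃ π : Equiv.Perm (Fin 2), ∀ (ε : Fin 2) (x : Fin r), (σ (ε, x)).1 = π ε) := by
  obtain rfl : ρ = gen r := funext fun i => by
    rcases lt_trichotomy ((i : ℕ) + 2) r with h | h | h
    · rw [hlow i (by omega), gen_of_lt h]; rfl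
    · rw [hr2 i (by omega), gen_of_add_two_eq h, rowHom_swap]
      congr <;> omega
    · rw [hr1 i (by omega), gen_of_add_one_eq (by omega)]; rfl
  refine ⟨fun i j => gen_mul_gen_sq, parabolic_inf_parabolic, fun σ => ?_⟩
  rw [← Set.image_univ]
  exact mem_parabolic_univ_iff (by omega)
end

section
/- Let r ≥ 2 and 1 ≤ h ≤ r−1 be integers. On the set Fin (h+1) ⊕ Fin (r+1), define involutions ρ₀,…,ρ_{r−1} by: for 0 ≤ l ≤ h−1, ρ_l := (inl l, inl (l+1))·(inr l, inr (l+1)); and for h ≤ l ≤ r−1, ρ_l := (inr l, inr (l+1)); where (p, q) denotes the transposition Equiv.swap p q and inl, inr are the inclusions into the sum type. Then the family (ρ₀,…,ρ_{r−1}) satisfies the string property and the intersection property, and the generated subgroup is exactly the subgroup of all permutations preserving each summand: ⟨ρ₀,…,ρ_{r−1}⟩ = (Equiv.Perm.sumCongrHom (Fin (h+1)) (Fin (r+1))).range (a group isomorphic to S_{h+1} × S_{r+1}). -/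
/-!
Under `Equiv.Perm.sumCongrHom` the generator `ρ l` is the pair `(t_l, t_l)` of adjacent
transpositions, with first entry `1` when `l ≥ h`. For a set `E` of edges of the path
`0 — 1 — ⋯ — r`, the pairs `ρ l` with `l ∈ E` generate exactly the pairs `(σ, τ)` that preserve the
components of the path with edge set `E` and satisfy `σ = τ` on every component not reaching
`h + 1`. On a component reaching `h + 1` the two coordinates decouple: starting from
`ρ h = (1, t_h)` and going down, conjugation yields `(1, t_l)` for each of its edges. Each condition
of this description is compatible with intersecting edge sets, which gives the intersection
property, and for the full edge set it describes the whole product.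
-/

open Sum

theorem Equiv.swap_conj_swap {α : Type*} [DecidableEq α] {a b c : α} (hab : a ≠ b)
    (hac : a ≠ c) (hbc : b ≠ c) :
    (swap b c * swap a b) * swap b c * (swap b c * swap a b)⁻¹ = swap a b := by
  rw [← swap_apply_apply, Perm.mul_apply, Perm.mul_apply, swap_apply_right,
    swap_apply_of_ne_of_ne hab hac, swap_apply_of_ne_of_ne hac.symm hbc.symm, swap_apply_right]

theorem Subgroup.mk_one_conj_mem {G K : Type*} [Group G] [Group K] {H : Subgroup (G × K)}
    {p : G × K} {τ : K} (hp : p ∈ H) (hτ : ((1 : G), τ) ∈ H) :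
    ((1 : G), p.2 * τ * p.2⁻¹) ∈ H := by
  convert H.mul_mem (H.mul_mem hp hτ) (H.inv_mem hp) using 1
  ext <;> simp

namespace StringC

open Equiv Equiv.Perm MulAction

/-- `x` and `y` lie in the same component of the path on `ℕ` whose edge `l` joins `l` and `l + 1`
and is present iff `l ∈ E`. -/
def Joined (E : Set ℕ) (x y : ℕ) : Prop := Set.Ico (min x y) (max x y) ⊆ E

namespace Joined

variable {E F : Set ℕ} {x y z l : ℕ}

theorem refl (E : Set ℕ) (x : ℕ) : Joined E x x := by
  simp [Joined]

theorem symm (h : Joined E x y) : Joined E y x := by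
  rwa [Joined, min_comm, max_comm]

theorem mono (h : Joined E x y) (hEF : E ⊆ F) : Joined F x y := h.trans hEF

theorem of_mem_Icc (h : Joined E x y) (hz : z ∈ Set.Icc (min x y) (max x y)) : Joined E x z :=
  fun l hl => h ⟨by simp only [Set.mem_Ico, Set.mem_Icc] at hl hz; omega,
    by simp only [Set.mem_Ico, Set.mem_Icc] at hl hz; omega⟩

theorem trans (hxy : Joined E x y) (hyz : Joined E y z) : Joined E x z := by
  intro l hl
  simp only [Set.mem_Ico] at hl
  by_cases hl' : min x y ≤ l ∧ l < max x y
  · exact hxy hl'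
  · exact hyz ⟨by omega, by omega⟩

theorem inter_iff : Joined (E ∩ F) x y ↔ Joined E x y ∧ Joined F x y :=
  Set.subset_inter_iff

theorem succ_iff : Joined E l (l + 1) ↔ l ∈ E := by
  refine ⟨fun h => h ⟨by omega, by omega⟩, fun hl m hm => ?_⟩
  simp only [Set.mem_Ico] at hm
  rwa [show m = l by omega]

end Joined

section AdjSwap

variable {n : ℕ}

def adjSwap (l : ℕ) : Perm (Fin (n + 1)) :=
  if hl : l < n then swap ⟨l, by omega⟩ ⟨l + 1, by omega⟩ else 1

theorem val_adjSwap {l : ℕ} (x : Fin (n + 1)) :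
    (adjSwap l x : ℕ) =
      if l < n ∧ (x : ℕ) = l then l + 1 else if l < n ∧ (x : ℕ) = l + 1 then l else x := by
  unfold adjSwap
  split_ifs <;> simp_all [swap_apply_def, Fin.ext_iff]

theorem adjSwap_of_le {l : ℕ} (hl : n ≤ l) : (adjSwap l : Perm (Fin (n + 1))) = 1 :=
  dif_neg (by omega)

@[simp]
theorem adjSwap_inv (l : ℕ) : (adjSwap l : Perm (Fin (n + 1)))⁻¹ = adjSwap l := by
  unfold adjSwap
  split_ifs <;> simp

theorem adjSwap_mul_self (l : ℕ) : (adjSwap l * adjSwap l : Perm (Fin (n + 1))) = 1 := by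
  nth_rw 1 [← adjSwap_inv l]
  exact inv_mul_cancel _

theorem commute_adjSwap {i j : ℕ} (hij : i + 2 ≤ j ∨ j + 2 ≤ i) :
    Commute (adjSwap i : Perm (Fin (n + 1))) (adjSwap j) :=
  Equiv.ext fun x => Fin.ext (by simp only [Perm.mul_apply, val_adjSwap]; split_ifs <;> omega)

theorem adjSwap_conj {l : ℕ} (hl : l + 1 < n) :
    (adjSwap (l + 1) * adjSwap l) * adjSwap (l + 1) * (adjSwap (l + 1) * adjSwap l)⁻¹ =
      (adjSwap l : Perm (Fin (n + 1))) := by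
  simp only [adjSwap, dif_pos hl, dif_pos (show l < n by omega)]
  exact swap_conj_swap (by simp [Fin.ext_iff]) (by simp [Fin.ext_iff]; omega)
    (by simp [Fin.ext_iff])

theorem joined_adjSwap (l : ℕ) (x : Fin (n + 1)) : Joined {l} x (adjSwap l x) := by
  rw [val_adjSwap]
  split_ifs with hx hx'
  · rw [hx.2]
    exact Joined.succ_iff.2 rfl
  · rw [hx'.2]
    exact (Joined.succ_iff.2 rfl : Joined {l} l (l + 1)).symm
  · exact Joined.refl _ _

theorem joined_inv_apply {E : Set ℕ} {π : Perm (Fin (n + 1))}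
    (h : ∀ x : Fin (n + 1), Joined E x (π x)) (x : Fin (n + 1)) : Joined E x (π⁻¹ x) := by
  simpa using (h (π⁻¹ x)).symm

theorem mem_orbit_closure_adjSwap {E : Set ℕ} {x y : Fin (n + 1)} (h : Joined E x y) :
    y ∈ orbit (Subgroup.closure (adjSwap '' (E ∩ Set.Iio n) : Set (Perm (Fin (n + 1))))) x := by
  set G := Subgroup.closure (adjSwap '' (E ∩ Set.Iio n) : Set (Perm (Fin (n + 1))))
  have step : ∀ (k : ℕ) (a b : Fin (n + 1)), (b : ℕ) = a + k → Joined E a b → b ∈ orbit G a := by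
    intro k
    induction k with
    | zero =>
      intro a b hab _
      rw [Fin.ext hab]
      exact mem_orbit_self a
    | succ k ih =>
      intro a b hab hj
      let c : Fin (n + 1) := ⟨a + k, by omega⟩
      have hc : c ∈ orbit G a := ih a c rfl (hj.of_mem_Icc ⟨by simp only [c]; omega,
        by simp only [c]; omega⟩)
      have hk : (a : ℕ) + k ∈ E ∩ Set.Iio n := ⟨hj ⟨by omega, by omega⟩, Set.mem_Iio.2 (by omega)⟩
      have hcb : adjSwap ((a : ℕ) + k) c = b :=
        Fin.ext (by rw [val_adjSwap]; simp only [c, and_true]; split_ifs <;> omega)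
      rw [← orbit_eq_iff.mpr hc]
      exact mem_orbit_iff.mpr ⟨⟨_, Subgroup.subset_closure ⟨_, hk, rfl⟩⟩, hcb⟩
  obtain hxy | hyx := le_total x y
  · exact step (y - x) x y (by omega) h
  · exact mem_orbit_symm.mp (step (x - y) y x (by omega) h.symm)

theorem mem_closure_adjSwap {E : Set ℕ} {π : Perm (Fin (n + 1))}
    (h : ∀ x : Fin (n + 1), Joined E x (π x)) : π ∈ Subgroup.closure (adjSwap '' E) := by
  have hswap : ∀ f ∈ (adjSwap '' (E ∩ Set.Iio n) : Set (Perm (Fin (n + 1)))), f.IsSwap := by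
    rintro _ ⟨l, ⟨-, hl⟩, rfl⟩
    rw [adjSwap, dif_pos (show l < n from hl)]
    exact ⟨_, _, by simp [Fin.ext_iff], rfl⟩
  refine Subgroup.closure_mono (Set.image_mono (Set.inter_subset_left (t := Set.Iio n))) ?_
  exact (mem_closure_isSwap hswap).2 ⟨Set.toFinite _, fun x => mem_orbit_closure_adjSwap (h x)⟩

end AdjSwap

section Pairs

variable {h r : ℕ}

/-- The image of `ρ l` in `Perm (Fin (h + 1)) × Perm (Fin (r + 1))`; the first entry is `1`
for `l ≥ h` because `adjSwap` falls back to `1`. -/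
def pairSwap (h r l : ℕ) : Perm (Fin (h + 1)) × Perm (Fin (r + 1)) := (adjSwap l, adjSwap l)

theorem pairSwap_sq (l : ℕ) : pairSwap h r l ^ 2 = 1 := by
  rw [sq]
  ext1 <;> exact adjSwap_mul_self l

theorem commute_pairSwap {i j : ℕ} (hij : i + 2 ≤ j ∨ j + 2 ≤ i) :
    Commute (pairSwap h r i) (pairSwap h r j) :=
  Commute.prod (commute_adjSwap hij) (commute_adjSwap hij)

/-- The subgroup generated by `pairSwap h r '' E` when `h < r`. A component of the edge set `E`
that does not reach `h + 1` lies inside `Fin (h + 1)`, and on it the two coordinates must agree. -/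
def blockPairs (hhr : h ≤ r) (E : Set ℕ) :
    Subgroup (Perm (Fin (h + 1)) × Perm (Fin (r + 1))) where
  carrier := {p | (∀ x : Fin (h + 1), Joined E x (p.1 x)) ∧
    (∀ y : Fin (r + 1), Joined E y (p.2 y)) ∧
    ∀ x : Fin (h + 1), ¬ Joined E x (h + 1) → (p.1 x : ℕ) = p.2 (x.castLE (by omega))}
  one_mem' := ⟨fun x => Joined.refl _ _, fun y => Joined.refl _ _, fun x _ => rfl⟩
  mul_mem' := by
    rintro a b ⟨ha₁, ha₂, ha⟩ ⟨hb₁, hb₂, hb⟩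
    refine ⟨fun x => (hb₁ x).trans (ha₁ _), fun y => (hb₂ y).trans (ha₂ _), fun x hx => ?_⟩
    have hbx : (b.1 x).castLE (by omega) = b.2 (x.castLE (by omega)) := Fin.ext (hb x hx)
    simpa [hbx] using ha (b.1 x) fun hj => hx ((hb₁ x).trans hj)
  inv_mem' := by
    rintro a ⟨ha₁, ha₂, ha⟩
    refine ⟨joined_inv_apply ha₁, joined_inv_apply ha₂, fun x hx => ?_⟩
    have hax : a.2 ((a.1⁻¹ x).castLE (by omega)) = x.castLE (by omega) := by
      refine Fin.ext ?_
      simpa using (ha (a.1⁻¹ x) fun hj => hx ((joined_inv_apply ha₁ x).trans hj)).symm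
    simp [← hax]

theorem pairSwap_mem_blockPairs (hhr : h ≤ r) {E : Set ℕ} {l : ℕ} (hl : l ∈ E) :
    pairSwap h r l ∈ blockPairs hhr E := by
  have hjoined {n : ℕ} (x : Fin (n + 1)) : Joined E x (adjSwap l x) :=
    (joined_adjSwap l x).mono (Set.singleton_subset_iff.2 hl)
  refine ⟨hjoined, hjoined, fun x hx => ?_⟩
  have hxl : (x : ℕ) = l → l < h := fun hxl => by
    by_contra hlh
    rw [show (x : ℕ) = h by omega, ← show l = h by omega] at hx
    exact hx (Joined.succ_iff.2 hl)
  simp only [pairSwap, val_adjSwap, Fin.val_castLE]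
  split_ifs <;> omega

theorem closure_pairSwap_le (hhr : h ≤ r) (E : Set ℕ) :
    Subgroup.closure (pairSwap h r '' E) ≤ blockPairs hhr E := by
  rw [Subgroup.closure_le]
  rintro _ ⟨l, hl, rfl⟩
  exact pairSwap_mem_blockPairs hhr hl

theorem blockPairs_inf_le (hhr : h ≤ r) (E F : Set ℕ) :
    blockPairs hhr E ⊓ blockPairs hhr F ≤ blockPairs hhr (E ∩ F) := by
  rintro p ⟨⟨hE₁, hE₂, hE⟩, ⟨hF₁, hF₂, hF⟩⟩
  refine ⟨fun x => Joined.inter_iff.2 ⟨hE₁ x, hF₁ x⟩, fun y => Joined.inter_iff.2 ⟨hE₂ y, hF₂ y⟩,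
    fun x hx => ?_⟩
  rw [Joined.inter_iff, not_and_or] at hx
  exact hx.elim (hE x) (hF x)

theorem one_adjSwap_mem_closure (hhr : h < r) {E : Set ℕ} {l : ℕ} (hl : l ∈ E)
    (hj : Joined E l (h + 1)) :
    ((1 : Perm (Fin (h + 1))), (adjSwap l : Perm (Fin (r + 1)))) ∈
      Subgroup.closure (pairSwap h r '' E) := by
  have hgen : pairSwap h r l ∈ Subgroup.closure (pairSwap h r '' E) :=
    Subgroup.subset_closure ⟨l, hl, rfl⟩
  by_cases hlh : h ≤ l
  · simpa [pairSwap, adjSwap_of_le hlh] using hgen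
  · have hj' : Joined E (l + 1) (h + 1) := (Joined.succ_iff.2 hl).symm.trans hj
    have ih := one_adjSwap_mem_closure hhr (hj' ⟨by omega, by omega⟩) hj'
    have := Subgroup.mk_one_conj_mem (Subgroup.mul_mem _ ih hgen) ih
    simpa only [Prod.snd_mul, pairSwap, adjSwap_conj (show l + 1 < r by omega)] using this
termination_by h - l

theorem blockPairs_le_closure (hhr : h < r) (E : Set ℕ) :
    blockPairs hhr.le E ≤ Subgroup.closure (pairSwap h r '' E) := by
  intro p hp
  set H := Subgroup.closure (pairSwap h r '' E)
  obtain ⟨w, hwH, hw⟩ : ∃ w ∈ H, w.2 = p.2 := by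
    have : p.2 ∈ H.map (MonoidHom.snd _ _) := by
      rw [MonoidHom.map_closure, ← Set.image_comp]
      exact mem_closure_adjSwap hp.2.1
    simpa using this
  set q := p * w⁻¹
  have hq2 : q.2 = 1 := by simp [q, hw]
  obtain ⟨hq₁, -, hq⟩ : q ∈ blockPairs hhr.le E :=
    mul_mem hp (inv_mem (closure_pairSwap_le hhr.le E hwH))
  have hq1 : q.1 ∈ Subgroup.closure (adjSwap '' {l | l ∈ E ∧ Joined E l (h + 1)}) := by
    refine mem_closure_adjSwap fun x => ?_
    by_cases hx : Joined E x (h + 1)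
    · intro l hl
      simp only [Set.mem_Ico] at hl
      exact ⟨hq₁ x ⟨hl.1, hl.2⟩, ((hq₁ x).of_mem_Icc ⟨by omega, by omega⟩).symm.trans hx⟩
    · have hfix : q.1 x = x := Fin.ext (by simpa [hq2] using hq x hx)
      rw [hfix]
      exact Joined.refl _ _
  have hq1H : ((q.1, 1) : Perm (Fin (h + 1)) × Perm (Fin (r + 1))) ∈ H := by
    have := Subgroup.mem_map_of_mem (MonoidHom.inl (Perm (Fin (h + 1))) (Perm (Fin (r + 1)))) hq1
    rw [MonoidHom.map_closure] at this
    refine (Subgroup.closure_le _).2 ?_ this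
    rintro _ ⟨_, ⟨l, ⟨hl, hj⟩, rfl⟩, rfl⟩
    simpa [pairSwap, adjSwap_mul_self] using
      H.mul_mem (Subgroup.subset_closure ⟨l, hl, rfl⟩)
        (H.inv_mem (one_adjSwap_mem_closure hhr hl hj))
  have hp : p = (q.1, 1) * w := by
    rw [← hq2, Prod.mk.eta, inv_mul_cancel_right]
  rw [hp]
  exact H.mul_mem hq1H hwH

theorem closure_pairSwap_eq (hhr : h < r) (E : Set ℕ) :
    Subgroup.closure (pairSwap h r '' E) = blockPairs hhr.le E :=
  le_antisymm (closure_pairSwap_le hhr.le E) (blockPairs_le_closure hhr E)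

theorem closure_pairSwap_inf (hhr : h < r) (E F : Set ℕ) :
    Subgroup.closure (pairSwap h r '' E) ⊓ Subgroup.closure (pairSwap h r '' F) =
      Subgroup.closure (pairSwap h r '' (E ∩ F)) := by
  refine le_antisymm ?_ (le_inf (Subgroup.closure_mono (Set.image_mono Set.inter_subset_left))
    (Subgroup.closure_mono (Set.image_mono Set.inter_subset_right)))
  simp only [closure_pairSwap_eq hhr]
  exact blockPairs_inf_le hhr.le E F

theorem closure_pairSwap_Iio (hhr : h < r) :
    Subgroup.closure (pairSwap h r '' Set.Iio r) = ⊤ := by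
  have hj (x y : ℕ) (hx : x ≤ r) (hy : y ≤ r) : Joined (Set.Iio r) x y := fun l hl => by
    simp only [Set.mem_Ico, Set.mem_Iio] at hl ⊢
    omega
  rw [closure_pairSwap_eq hhr, eq_top_iff]
  rintro p -
  exact ⟨fun x => hj _ _ (by omega) (by omega), fun y => hj _ _ (by omega) (by omega),
    fun x hx => (hx (hj _ _ (by omega) (by omega))).elim⟩

end Pairs

end StringC

open StringC

/-- Lemma "result1": the CPR graph for `S_{h+1} × S_{r+1}` — a doubled initial path
followed by a tail on the second summand — satisfies the string and intersection
properties, and generates the subgroup of permutations preserving each summand. -/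
theorem Sh1_times_Sr1_is_string_C_group
    (r h : ℕ) (hr : 2 ≤ r) (h2 : h ≤ r - 1)
    (ρ : Fin r → Equiv.Perm (Fin (h + 1) ⊕ Fin (r + 1)))
    (hlow : ∀ l : Fin r, ∀ hl : (l : ℕ) + 1 ≤ h,
      ρ l = Equiv.swap (inl ⟨(l : ℕ), by omega⟩) (inl ⟨(l : ℕ) + 1, by omega⟩) *
        Equiv.swap (inr ⟨(l : ℕ), by omega⟩) (inr ⟨(l : ℕ) + 1, by omega⟩))
    (hhigh : ∀ l : Fin r, ∀ hl : h ≤ (l : ℕ),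
      ρ l = Equiv.swap (inr ⟨(l : ℕ), by omega⟩) (inr ⟨(l : ℕ) + 1, by omega⟩)) :
    (∀ i j : Fin r, (i : ℕ) + 2 ≤ (j : ℕ) ∨ (j : ℕ) + 2 ≤ (i : ℕ) →
      (ρ i * ρ j) ^ 2 = 1) ∧
    (∀ I J : Set (Fin r),
      Subgroup.closure (ρ '' I) ⊓ Subgroup.closure (ρ '' J) =
        Subgroup.closure (ρ '' (I ∩ J))) ∧
    Subgroup.closure (Set.range ρ) =
      (Equiv.Perm.sumCongrHom (Fin (h + 1)) (Fin (r + 1))).range := by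
  have hhr : h < r := by omega
  set F := Equiv.Perm.sumCongrHom (Fin (h + 1)) (Fin (r + 1))
  have hρ (l : Fin r) : ρ l = F (pairSwap h r l) := by
    by_cases hl : (l : ℕ) + 1 ≤ h
    · rw [hlow l hl, ← Equiv.Perm.sumCongr_swap_one, ← Equiv.Perm.sumCongr_one_swap,
        Equiv.Perm.sumCongr_mul, mul_one, one_mul]
      simp only [F, Equiv.Perm.sumCongrHom_apply, pairSwap, adjSwap, dif_pos l.isLt,
        dif_pos (Nat.lt_of_succ_le hl)]
    · rw [hhigh l (by omega), ← Equiv.Perm.sumCongr_one_swap]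
      simp only [F, Equiv.Perm.sumCongrHom_apply, pairSwap, adjSwap_of_le (show h ≤ l by omega)]
      rw [adjSwap, dif_pos l.isLt]
  have hcl (I : Set (Fin r)) :
      Subgroup.closure (ρ '' I) = (Subgroup.closure (pairSwap h r '' (Fin.val '' I))).map F := by
    rw [MonoidHom.map_closure, Set.image_image, Set.image_image]
    exact congrArg _ (Set.image_congr fun l _ => hρ l)
  refine ⟨fun i j hij => ?_, fun I J => ?_, ?_⟩
  · rw [hρ, hρ, ← map_mul, ← map_pow, (commute_pairSwap hij).mul_pow, pairSwap_sq, pairSwap_sq,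
      one_mul, map_one]
  · rw [hcl, hcl, hcl, ← Subgroup.map_inf_eq _ _ _ Equiv.Perm.sumCongrHom_injective,
      Set.image_inter Fin.val_injective, closure_pairSwap_inf hhr]
  · rw [← Set.image_univ, hcl, Set.image_univ, Fin.range_val, closure_pairSwap_Iio hhr,
      MonoidHom.range_eq_map]
end
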